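/- For every family F of finite subsets of ℕ and every infinite set A ⊆ ℕ, there exists an infinite set B ⊆ A such that either no finite subset of B belongs to F, or every infinite subset C of B has an initial segment belonging to F. -/

import Mathlib

/-!
Combinatorial forcing. Say that `B` accepts `a` if every infinite `C ⊆ B` has an initial segment
`c` with `a ∪ c ∈ F`, and rejects `a` if no infinite subset of `B` accepts `a`. A diagonal
argument gives an infinite `M ⊆ A` whose tail `M/a` above each finite `a ⊆ M` either accepts or
rejects `a`. If `M` accepts `∅`, the second alternative holds for `M`. Otherwise rejection
propagates: if `M/a` rejects `a`, then `M/(a ∪ {b})` rejects `a ∪ {b}` for all but finitely many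
`b ∈ M/a`, since infinitely many exceptions would form a set accepting `a`. A second diagonal
argument thins `M` to an infinite `B` whose finite subsets are all rejected, hence not in `F`.
-/

/-- `a` is an initial segment of `C`: `a ⊆ C` and `a` consists of the first `|a|`
elements of `C` in increasing order. -/
def IsInitSeg (a : Finset ℕ) (C : Set ℕ) : Prop :=
  ↑a ⊆ C ∧ ∀ x ∈ C, x ∉ a → ∀ y ∈ a, y < x

open Finset

namespace Galvin

/-- The tail `B/a` of `B` above the finite set `a`. -/
def above (a : Finset ℕ) (B : Set ℕ) : Set ℕ := {x ∈ B | ∀ y ∈ a, y < x}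

theorem above_mono (a : Finset ℕ) {B C : Set ℕ} (h : C ⊆ B) : above a C ⊆ above a B :=
  fun _ hx => ⟨h hx.1, hx.2⟩

theorem above_subset (a : Finset ℕ) (B : Set ℕ) : above a B ⊆ B := fun _ hx => hx.1

@[simp]
theorem above_empty (B : Set ℕ) : above ∅ B = B := by
  simp [above]

theorem above_insert (b : ℕ) (a : Finset ℕ) (B : Set ℕ) :
    above (insert b a) B = above {b} (above a B) := by
  ext x
  simp only [above, Set.mem_ofPred_eq, mem_insert, mem_singleton, forall_eq_or_imp, forall_eq]
  tauto

theorem infinite_above (a : Finset ℕ) {B : Set ℕ} (hB : B.Infinite) : (above a B).Infinite :=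
  (hB.sdiff (Set.finite_Iic (a.sup id))).mono fun _ hx =>
    ⟨hx.1, fun _ hy => (le_sup (f := id) hy).trans_lt (not_le.1 hx.2)⟩

section Diagonalization

variable {Q : Finset ℕ → Set ℕ → Prop}

theorem exists_infinite_subset_forall_mem
    (hQ_anti : ∀ a {B C : Set ℕ}, C ⊆ B → Q a B → Q a C)
    (hQ_dense : ∀ a {B : Set ℕ}, B.Infinite → ∃ C ⊆ B, C.Infinite ∧ Q a C)
    (s : Finset (Finset ℕ)) {B : Set ℕ} (hB : B.Infinite) :
    ∃ C ⊆ B, C.Infinite ∧ ∀ a ∈ s, Q a C := by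
  induction s using Finset.induction_on generalizing B with
  | empty => exact ⟨B, subset_rfl, hB, by simp⟩
  | insert a s _ ih =>
    obtain ⟨C, hCB, hC, hCs⟩ := ih hB
    obtain ⟨D, hDC, hD, hDa⟩ := hQ_dense a hC
    refine ⟨D, hDC.trans hCB, hD, ?_⟩
    simp only [mem_insert, forall_eq_or_imp]
    exact ⟨hDa, fun b hb => hQ_anti b hDC (hCs b hb)⟩

theorem exists_infinite_subset_forall_above
    (hQ_anti : ∀ a {B C : Set ℕ}, C ⊆ B → Q a B → Q a C)
    (hQ_dense : ∀ a {B : Set ℕ}, B.Infinite → ∃ C ⊆ B, C.Infinite ∧ Q a C)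
    {A : Set ℕ} (hA : A.Infinite) :
    ∃ M ⊆ A, M.Infinite ∧ ∀ a : Finset ℕ, ↑a ⊆ M → Q a (above a M) := by
  have step : ∀ B : {B : Set ℕ // B.Infinite}, ∃ C : {B : Set ℕ // B.Infinite},
      C.1 ⊆ above {sInf B.1} B.1 ∧ ∀ a ⊆ range (sInf B.1 + 1), Q a C.1 := by
    rintro ⟨B, hB⟩
    obtain ⟨C, hCB, hC, hCQ⟩ := exists_infinite_subset_forall_mem hQ_anti hQ_dense
      (range (sInf B + 1)).powerset (infinite_above {sInf B} hB)
    exact ⟨⟨C, hC⟩, hCB, fun a ha => hCQ a (mem_powerset.2 ha)⟩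
  choose next hnext_sub hnext_Q using step
  set D : ℕ → Set ℕ := fun n => (next^[n] ⟨A, hA⟩).1 with hD
  set m : ℕ → ℕ := fun n => sInf (D n) with hm
  have hD_succ : ∀ n, D (n + 1) ⊆ above {m n} (D n) := fun n => by
    simp only [hD, hm, Function.iterate_succ_apply']
    exact hnext_sub _
  have hD_Q : ∀ n, ∀ a ⊆ range (m n + 1), Q a (D (n + 1)) := fun n => by
    simp only [hD, hm, Function.iterate_succ_apply']
    exact hnext_Q _
  have hm_mem : ∀ n, m n ∈ D n := fun n => Nat.sInf_mem (next^[n] ⟨A, hA⟩).2.nonempty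
  have hD_anti : Antitone D :=
    antitone_nat_of_succ_le fun n => (hD_succ n).trans (above_subset _ _)
  have hm_mono : StrictMono m :=
    strictMono_nat_of_lt_succ fun n => (hD_succ n (hm_mem (n + 1))).2 _ (mem_singleton_self _)
  have htail : ∀ n, above {m n} (Set.range m) ⊆ D (n + 1) := by
    rintro n _ ⟨⟨k, rfl⟩, hk⟩
    have hnk : n < k := hm_mono.lt_iff_lt.1 (hk _ (mem_singleton_self _))
    exact hD_anti hnk (hm_mem k)
  -- The least element `m 0` is dropped so that the tail above `∅` is also covered by `htail`.
  refine ⟨above {m 0} (Set.range m), ?_, infinite_above _ (Set.infinite_range_of_injective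
    hm_mono.injective), fun a ha => ?_⟩
  · rintro _ ⟨⟨k, rfl⟩, -⟩
    exact hD_anti (Nat.zero_le k) (hm_mem k)
  rcases a.eq_empty_or_nonempty with rfl | hne
  · rw [above_empty]
    exact hQ_anti ∅ (htail 0) (hD_Q 0 ∅ (empty_subset _))
  · obtain ⟨⟨n, hn⟩, -⟩ := ha (max'_mem a hne)
    refine hQ_anti a (fun x hx => htail n ⟨(above_subset _ _ hx).1, ?_⟩) (hD_Q n a ?_)
    · simpa [← hn] using hx.2 _ (max'_mem a hne)
    · exact fun y hy => mem_range_succ_iff.2 (hn ▸ le_max' a y hy)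

theorem exists_infinite_subset_forall_finset_subset {R : Finset ℕ → Prop} {A : Set ℕ}
    (hA : A.Infinite) (h_empty : R ∅)
    (h_insert : ∀ a : Finset ℕ, ↑a ⊆ A → R a → {b ∈ A | ¬R (insert b a)}.Finite) :
    ∃ B ⊆ A, B.Infinite ∧ ∀ a : Finset ℕ, ↑a ⊆ B → R a := by
  obtain ⟨B, hBA, hB, hBQ⟩ := exists_infinite_subset_forall_above
    (Q := fun a C => ↑a ⊆ A → R a → ∀ b ∈ C, b ∈ A → R (insert b a))
    (fun _ _ _ hCB h haA ha b hb => h haA ha b (hCB hb))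
    (fun a B hB => by
      by_cases ha : ↑a ⊆ A ∧ R a
      · exact ⟨B \ {b ∈ A | ¬R (insert b a)}, Set.sdiff_subset, hB.sdiff (h_insert a ha.1 ha.2),
          fun _ _ b hb hbA => not_not.1 fun hn => hb.2 ⟨hbA, hn⟩⟩
      · exact ⟨B, subset_rfl, hB, fun haA hRa => absurd ⟨haA, hRa⟩ ha⟩) hA
  refine ⟨B, hBA, hB, fun a => ?_⟩
  induction a using Finset.induction_on_max with
  | empty => exact fun _ => h_empty
  | insert b a hb ih =>
    intro hsub
    rw [coe_insert, Set.insert_subset_iff] at hsub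
    exact hBQ a hsub.2 (hsub.2.trans hBA) (ih hsub.2) b ⟨hsub.1, hb⟩ (hBA hsub.1)

end Diagonalization

theorem IsInitSeg.insert_sInf {c : Finset ℕ} {C : Set ℕ} (hC : C.Nonempty)
    (hc : IsInitSeg c (above {sInf C} C)) : IsInitSeg (insert (sInf C) c) C := by
  have hmin : sInf C ∈ C := Nat.sInf_mem hC
  refine ⟨?_, fun x hx hxc y hy => ?_⟩
  · rw [coe_insert, Set.insert_subset_iff]
    exact ⟨hmin, hc.1.trans (above_subset _ _)⟩
  have hlt : sInf C < x :=
    (Nat.sInf_le hx).lt_of_ne fun h => hxc (h ▸ mem_insert_self _ _)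
  rcases mem_insert.1 hy with rfl | hy
  · exact hlt
  · exact hc.2 x ⟨hx, by simpa using hlt⟩ (fun h => hxc (mem_insert_of_mem h)) y hy

variable {F : Set (Finset ℕ)}

variable (F) in
def Accepts (a : Finset ℕ) (B : Set ℕ) : Prop :=
  ∀ C ⊆ B, C.Infinite → ∃ c, IsInitSeg c C ∧ a ∪ c ∈ F

variable (F) in
def Rejects (a : Finset ℕ) (B : Set ℕ) : Prop :=
  ∀ C ⊆ B, C.Infinite → ¬Accepts F a C

theorem Accepts.anti {a : Finset ℕ} {B C : Set ℕ} (h : C ⊆ B) (hB : Accepts F a B) :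
    Accepts F a C :=
  fun D hD => hB D (hD.trans h)

theorem Rejects.anti {a : Finset ℕ} {B C : Set ℕ} (h : C ⊆ B) (hB : Rejects F a B) :
    Rejects F a C :=
  fun D hD => hB D (hD.trans h)

theorem accepts_of_mem {a : Finset ℕ} (ha : a ∈ F) (B : Set ℕ) : Accepts F a B :=
  fun _ _ _ => ⟨∅, ⟨by simp, by simp⟩, by simpa using ha⟩

theorem exists_subset_accepts_or_rejects (a : Finset ℕ) {B : Set ℕ} (hB : B.Infinite) :
    ∃ C ⊆ B, C.Infinite ∧ (Accepts F a C ∨ Rejects F a C) := by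
  by_cases h : ∃ C ⊆ B, C.Infinite ∧ Accepts F a C
  · obtain ⟨C, hCB, hC, hacc⟩ := h
    exact ⟨C, hCB, hC, Or.inl hacc⟩
  · exact ⟨B, subset_rfl, hB, Or.inr fun C hCB hC hacc => h ⟨C, hCB, hC, hacc⟩⟩

theorem Rejects.finite_setOf_accepts_insert {a : Finset ℕ} {M : Set ℕ}
    (hrej : Rejects F a (above a M)) :
    {b ∈ above a M | Accepts F (insert b a) (above (insert b a) M)}.Finite := by
  by_contra hinf
  refine hrej _ (Set.sep_subset _ _) hinf fun C hC hCinf => ?_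
  have hmin : sInf C ∈ C := Nat.sInf_mem hCinf.nonempty
  obtain ⟨c, hc, hcF⟩ := (hC hmin).2 (above {sInf C} C)
    (by rw [above_insert]; exact above_mono _ (hC.trans (Set.sep_subset _ _)))
    (infinite_above _ hCinf)
  refine ⟨insert (sInf C) c, IsInitSeg.insert_sInf hCinf.nonempty hc, ?_⟩
  rwa [union_insert, ← insert_union]

theorem exists_infinite_subset_forall_rejects {M : Set ℕ} (hM : M.Infinite)
    (hdec : ∀ a : Finset ℕ, ↑a ⊆ M → Accepts F a (above a M) ∨ Rejects F a (above a M))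
    (hrej : Rejects F ∅ M) :
    ∃ B ⊆ M, B.Infinite ∧ ∀ a : Finset ℕ, ↑a ⊆ B → Rejects F a (above a M) := by
  refine exists_infinite_subset_forall_finset_subset hM (by simpa using hrej)
    fun a haM ha => ?_
  refine ((Set.finite_Iic (a.sup id)).union ha.finite_setOf_accepts_insert).subset ?_
  rintro b ⟨hbM, hb⟩
  by_cases hba : ∀ y ∈ a, y < b
  · have hsub : ↑(insert b a) ⊆ M := by
      rw [coe_insert, Set.insert_subset_iff]
      exact ⟨hbM, haM⟩
    exact Or.inr ⟨⟨hbM, hba⟩, (hdec _ hsub).resolve_right hb⟩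
  · push Not at hba
    obtain ⟨y, hy, hby⟩ := hba
    exact Or.inl (hby.trans (le_sup (f := id) hy))

end Galvin

open Galvin

/-- Relativized (localized) Galvin's lemma. -/
theorem galvin_lemma_relativized (F : Set (Finset ℕ)) (A : Set ℕ) (hA : A.Infinite) :
    ∃ B : Set ℕ, B ⊆ A ∧ B.Infinite ∧
      ((∀ a : Finset ℕ, ↑a ⊆ B → a ∉ F) ∨
        (∀ C : Set ℕ, C ⊆ B → C.Infinite → ∃ a ∈ F, IsInitSeg a C)) := by
  obtain ⟨M, hMA, hM, hdec⟩ := exists_infinite_subset_forall_above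
    (Q := fun a B => Accepts F a B ∨ Rejects F a B)
    (fun _ _ _ h => Or.imp (Accepts.anti h) (Rejects.anti h))
    (fun a _ hB => exists_subset_accepts_or_rejects a hB) hA
  rcases above_empty M ▸ hdec ∅ (by simp) with hacc | hrej
  · refine ⟨M, hMA, hM, Or.inr fun C hC hCinf => ?_⟩
    obtain ⟨c, hc, hcF⟩ := hacc C hC hCinf
    exact ⟨c, by simpa using hcF, hc⟩
  · obtain ⟨B, hBM, hB, hBrej⟩ := exists_infinite_subset_forall_rejects hM hdec hrej
    exact ⟨B, hBM.trans hMA, hB, Or.inl fun a ha haF =>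
      hBrej a ha _ subset_rfl (infinite_above a hM) (accepts_of_mem haF _)⟩
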